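/- arXiv:1309.0300 — 8 statements merged into one kernel-verified Lean document; each statement's English description precedes it below -/
import Mathlib

section
/- Let U and A be left-cancellative monoids with an action map A × U → U, (a,u) ↦ a·u, and a restriction map A × U → A, (a,u) ↦ a|_u, satisfying the Zappa-Szép axioms (B1)–(B8). If for each a ∈ A the map u ↦ a·u is injective, then the Zappa-Szép product U ⋈ A (with multiplication (u,a)(v,b) = (u(a·v), (a|_v)b)) is left cancellative. -/
theorem stmt1_general
    {U A : Type*} [Monoid U] [Monoid A]
    (hU : ∀ a b c : U, a * b = a * c → b = c)
    (hA : ∀ a b c : A, a * b = a * c → b = c)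
    (act : A → U → U) (res : A → U → A)
    (hinj : ∀ a : A, Function.Injective (act a)) :
    ∀ p q r : U × A,
      (p.1 * act p.2 q.1, res p.2 q.1 * q.2) = (p.1 * act p.2 r.1, res p.2 r.1 * r.2) →
      q = r := by
  rintro ⟨u, a⟩ ⟨v, b⟩ ⟨w, c⟩ h
  obtain ⟨hfst, hsnd⟩ := Prod.mk.inj h
  obtain rfl : v = w := hinj a (hU _ _ _ hfst)
  exact Prod.ext rfl (hA _ _ _ hsnd)

theorem stmt1
    {U A : Type*} [Monoid U] [Monoid A]
    (hU : ∀ a b c : U, a * b = a * c → b = c)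
    (hA : ∀ a b c : A, a * b = a * c → b = c)
    (act : A → U → U) (res : A → U → A)
    (B1 : ∀ u, act 1 u = u)
    (B2 : ∀ a b u, act (a * b) u = act a (act b u))
    (B3 : ∀ a, act a 1 = 1)
    (B4 : ∀ a, res a 1 = a)
    (B5 : ∀ a u v, act a (u * v) = act a u * act (res a u) v)
    (B6 : ∀ a u v, res a (u * v) = res (res a u) v)
    (B7 : ∀ u, res 1 u = 1)
    (B8 : ∀ a b u, res (a * b) u = res a (act b u) * res b u)
    (hinj : ∀ a : A, Function.Injective (act a)) :
    ∀ p q r : U × A,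
      (p.1 * act p.2 q.1, res p.2 q.1 * q.2) = (p.1 * act p.2 r.1, res p.2 r.1 * r.2) →
      q = r :=
  stmt1_general hU hA act res hinj
end

section
/- Let U and A be left-cancellative monoids with maps satisfying the Zappa-Szép axioms (B1)–(B8). Suppose U is a right LCM monoid, the family of principal right ideals of A is totally ordered by inclusion, and for each a ∈ A the map u ↦ a·u is a bijection of U. Then the Zappa-Szép product U ⋈ A is a right LCM monoid. -/
/-! Since every `a · _` is a bijection of `U`, a right common multiple of `(u, a)` and `(v, b)`
projects to one of `u` and `v`, and the right LCM `w = u (a·x) = v (b·y)` of `u, v` in `U` lifts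
to `U ⋈ A`. Of the two restrictions `a|_x` and `b|_y`, one is a right multiple of the other since
principal right ideals of `A` form a chain; pairing `w` with the larger one gives the right LCM of
`(u, a)` and `(v, b)`: any common multiple `(m, d)` has `m = w t`, and writing `t = (b|_y)·s`
identifies it as `(w, b|_y)(s, _)` by (B5) and (B6). -/

def IsRightMul {P : Type*} (mul : P → P → P) (p r : P) : Prop := ∃ q, mul p q = r

def IsRCM {P : Type*} (mul : P → P → P) (p q r : P) : Prop :=
  IsRightMul mul p r ∧ IsRightMul mul q r

def IsRLCM {P : Type*} (mul : P → P → P) (p q r : P) : Prop :=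
  IsRCM mul p q r ∧ ∀ s, IsRCM mul p q s → IsRightMul mul r s

theorem IsRCM.symm {P : Type*} {mul : P → P → P} {p q r : P} (h : IsRCM mul p q r) :
    IsRCM mul q p r :=
  ⟨h.2, h.1⟩

theorem IsRLCM.symm {P : Type*} {mul : P → P → P} {p q r : P} (h : IsRLCM mul p q r) :
    IsRLCM mul q p r :=
  ⟨h.1.symm, fun s hs => h.2 s hs.symm⟩

section ZappaSzep

variable {U A : Type*} [Monoid U] [Monoid A] (act : A → U → U) (res : A → U → A)

def zsMul (p q : U × A) : U × A :=
  (p.1 * act p.2 q.1, res p.2 q.1 * q.2)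

variable {act res}

theorem IsRCM.fst_of_zsMul {p q w : U × A} (h : IsRCM (zsMul act res) p q w) :
    IsRCM (· * ·) p.1 q.1 w.1 := by
  obtain ⟨⟨x, rfl⟩, ⟨y, hy⟩⟩ := h
  exact ⟨⟨_, rfl⟩, ⟨_, congrArg Prod.fst hy⟩⟩

theorem zsMul_left_cancel (hU : ∀ a b c : U, a * b = a * c → b = c)
    (hA : ∀ a b c : A, a * b = a * c → b = c) (hinj : ∀ a : A, Function.Injective (act a))
    (p q r : U × A) (h : zsMul act res p q = zsMul act res p r) : q = r := by
  obtain ⟨v, b⟩ := q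
  obtain ⟨v', b'⟩ := r
  have hv : v = v' := hinj p.2 (hU _ _ _ (congrArg Prod.fst h))
  subst hv
  exact Prod.ext rfl (hA _ _ _ (congrArg Prod.snd h))

theorem isRLCM_zsMul_of_isRightMul_res (hU : ∀ a b c : U, a * b = a * c → b = c)
    (B5 : ∀ a u v, act a (u * v) = act a u * act (res a u) v)
    (B6 : ∀ a u v, res a (u * v) = res (res a u) v)
    (hbij : ∀ a : A, Function.Bijective (act a))
    {u v w x y : U} {a b : A} (hw : IsRLCM (· * ·) u v w)
    (hx : u * act a x = w) (hy : v * act b y = w)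
    (hres : IsRightMul (· * ·) (res a x) (res b y)) :
    IsRLCM (zsMul act res) (u, a) (v, b) (w, res b y) := by
  obtain ⟨c, hc⟩ := hres
  refine ⟨⟨⟨(x, c), by simp [zsMul, hx, hc]⟩, ⟨(y, 1), by simp [zsMul, hy]⟩⟩, ?_⟩
  rintro ⟨m, d⟩ ⟨⟨⟨x', c'⟩, hx'⟩, ⟨⟨y', d'⟩, hy'⟩⟩
  have hmx : u * act a x' = m := congrArg Prod.fst hx'
  have hmy : v * act b y' = m := congrArg Prod.fst hy'
  have hd : res b y' * d' = d := congrArg Prod.snd hy'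
  obtain ⟨t, rfl⟩ := hw.2 m ⟨⟨_, hmx⟩, ⟨_, hmy⟩⟩
  obtain ⟨s, hs⟩ := (hbij (res b y)).2 t
  have hys : y' = y * s := by
    refine (hbij b).1 (hU v _ _ ?_)
    rw [hmy, B5, hs, ← mul_assoc, hy]
  exact ⟨(s, d'), by simp [zsMul, hs, ← B6, ← hys, hd]⟩

end ZappaSzep

theorem stmt2_general
    {U A : Type*} [Monoid U] [Monoid A]
    (hU : ∀ a b c : U, a * b = a * c → b = c)
    (hA : ∀ a b c : A, a * b = a * c → b = c)
    (act : A → U → U) (res : A → U → A)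
    (B5 : ∀ a u v, act a (u * v) = act a u * act (res a u) v)
    (B6 : ∀ a u v, res a (u * v) = res (res a u) v)
    (hUlcm : ∀ u v : U, (∃ w, IsRCM (· * ·) u v w) → ∃ w, IsRLCM (· * ·) u v w)
    (hAtot : ∀ a b : A, (∃ c, a * c = b) ∨ (∃ c, b * c = a))
    (hbij : ∀ a : A, Function.Bijective (act a)) :
    let zmul : U × A → U × A → U × A :=
      fun p q => (p.1 * act p.2 q.1, res p.2 q.1 * q.2)
    (∀ p q r : U × A, zmul p q = zmul p r → q = r) ∧
    (∀ p q : U × A, (∃ w, IsRCM zmul p q w) → ∃ w, IsRLCM zmul p q w) := by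
  intro zmul
  refine ⟨zsMul_left_cancel hU hA fun a => (hbij a).1, ?_⟩
  rintro ⟨u, a⟩ ⟨v, b⟩ ⟨m, hm⟩
  obtain ⟨w, hw⟩ := hUlcm u v ⟨m.1, hm.fst_of_zsMul⟩
  obtain ⟨⟨p, hp⟩, ⟨q, hq⟩⟩ := hw.1
  obtain ⟨x, rfl⟩ := (hbij a).2 p
  obtain ⟨y, rfl⟩ := (hbij b).2 q
  rcases hAtot (res a x) (res b y) with hxy | hyx
  · exact ⟨_, isRLCM_zsMul_of_isRightMul_res hU B5 B6 hbij hw hp hq hxy⟩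
  · exact ⟨_, (isRLCM_zsMul_of_isRightMul_res hU B5 B6 hbij hw.symm hq hp hyx).symm⟩

theorem stmt2
    {U A : Type*} [Monoid U] [Monoid A]
    (hU : ∀ a b c : U, a * b = a * c → b = c)
    (hA : ∀ a b c : A, a * b = a * c → b = c)
    (act : A → U → U) (res : A → U → A)
    (B1 : ∀ u, act 1 u = u)
    (B2 : ∀ a b u, act (a * b) u = act a (act b u))
    (B3 : ∀ a, act a 1 = 1)
    (B4 : ∀ a, res a 1 = a)
    (B5 : ∀ a u v, act a (u * v) = act a u * act (res a u) v)
    (B6 : ∀ a u v, res a (u * v) = res (res a u) v)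
    (B7 : ∀ u, res 1 u = 1)
    (B8 : ∀ a b u, res (a * b) u = res a (act b u) * res b u)
    (hUlcm : ∀ u v : U, (∃ w, IsRCM (· * ·) u v w) → ∃ w, IsRLCM (· * ·) u v w)
    (hAtot : ∀ a b : A, (∃ c, a * c = b) ∨ (∃ c, b * c = a))
    (hbij : ∀ a : A, Function.Bijective (act a)) :
    let zmul : U × A → U × A → U × A :=
      fun p q => (p.1 * act p.2 q.1, res p.2 q.1 * q.2)
    (∀ p q r : U × A, zmul p q = zmul p r → q = r) ∧
    (∀ p q : U × A, (∃ w, IsRCM zmul p q w) → ∃ w, IsRLCM zmul p q w) :=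
  stmt2_general hU hA act res B5 B6 hUlcm hAtot hbij
end

section
/- Under the hypotheses of the Zappa-Szép right LCM lemma (U right LCM, principal right ideals of A totally ordered, actions bijective), for (u,a), (v,b) ∈ U ⋈ A one has (u,a)(U⋈A) ∩ (v,b)(U⋈A) = ∅ if and only if uU ∩ vU = ∅. -/
namespace ZappaSzep

variable {U A : Type*} [Mul U] [Monoid A] (act : A → U → U) (res : A → U → A)

def zsMul (p q : U × A) : U × A := (p.1 * act p.2 q.1, res p.2 q.1 * q.2)

theorem isRightMul_zsMul_iff {u w : U} {a c : A} :
    IsRightMul (zsMul act res) (u, a) (w, c) ↔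
      ∃ x, u * act a x = w ∧ IsRightMul (· * ·) (res a x) c := by
  constructor
  · rintro ⟨⟨x, d⟩, h⟩
    exact ⟨x, congrArg Prod.fst h, d, congrArg Prod.snd h⟩
  · rintro ⟨x, hx, d, hd⟩
    exact ⟨(x, d), Prod.ext hx hd⟩

theorem isRCM_fst_of_isRCM_zsMul {p q w : U × A} (h : IsRCM (zsMul act res) p q w) :
    IsRCM (· * ·) p.1 q.1 w.1 := by
  obtain ⟨⟨x, hx⟩, ⟨y, hy⟩⟩ := h
  exact ⟨⟨act p.2 x.1, congrArg Prod.fst hx⟩, ⟨act q.2 y.1, congrArg Prod.fst hy⟩⟩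

theorem exists_isRCM_zsMul_of_isRCM
    (hsurj : ∀ a, Function.Surjective (act a))
    (htot : ∀ a b : A, (∃ c, a * c = b) ∨ (∃ c, b * c = a))
    {u v w : U} (a b : A) (h : IsRCM (· * ·) u v w) :
    ∃ c, IsRCM (zsMul act res) (u, a) (v, b) (w, c) := by
  obtain ⟨⟨x, hx⟩, ⟨y, hy⟩⟩ := h
  obtain ⟨x', rfl⟩ := hsurj a x
  obtain ⟨y', rfl⟩ := hsurj b y
  have hu (c : A) (hc : IsRightMul (· * ·) (res a x') c) :
      IsRightMul (zsMul act res) (u, a) (w, c) :=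
    (isRightMul_zsMul_iff act res).2 ⟨x', hx, hc⟩
  have hv (c : A) (hc : IsRightMul (· * ·) (res b y') c) :
      IsRightMul (zsMul act res) (v, b) (w, c) :=
    (isRightMul_zsMul_iff act res).2 ⟨y', hy, hc⟩
  rcases htot (res a x') (res b y') with hab | hba
  · exact ⟨res b y', hu _ hab, hv _ ⟨1, mul_one _⟩⟩
  · exact ⟨res a x', hu _ ⟨1, mul_one _⟩, hv _ hba⟩

end ZappaSzep

open ZappaSzep in
theorem stmt3_general
    {U A : Type*} [Monoid U] [Monoid A]
    (act : A → U → U) (res : A → U → A)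
    (hAtot : ∀ a b : A, (∃ c, a * c = b) ∨ (∃ c, b * c = a))
    (hbij : ∀ a : A, Function.Bijective (act a))
    (u v : U) (a b : A) :
    let zmul : U × A → U × A → U × A :=
      fun p q => (p.1 * act p.2 q.1, res p.2 q.1 * q.2)
    ((¬ ∃ w, IsRCM zmul (u, a) (v, b) w) ↔ ¬ ∃ w, IsRCM (· * ·) u v w) := by
  intro zmul
  refine not_congr ⟨fun ⟨w, hw⟩ => ⟨w.1, isRCM_fst_of_isRCM_zsMul act res hw⟩, ?_⟩
  rintro ⟨w, hw⟩
  obtain ⟨c, hc⟩ :=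
    exists_isRCM_zsMul_of_isRCM act res (fun a => (hbij a).2) hAtot a b hw
  exact ⟨(w, c), hc⟩

theorem stmt3
    {U A : Type*} [Monoid U] [Monoid A]
    (hU : ∀ a b c : U, a * b = a * c → b = c)
    (hA : ∀ a b c : A, a * b = a * c → b = c)
    (act : A → U → U) (res : A → U → A)
    (B1 : ∀ u, act 1 u = u)
    (B2 : ∀ a b u, act (a * b) u = act a (act b u))
    (B3 : ∀ a, act a 1 = 1)
    (B4 : ∀ a, res a 1 = a)
    (B5 : ∀ a u v, act a (u * v) = act a u * act (res a u) v)
    (B6 : ∀ a u v, res a (u * v) = res (res a u) v)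
    (B7 : ∀ u, res 1 u = 1)
    (B8 : ∀ a b u, res (a * b) u = res a (act b u) * res b u)
    (hUlcm : ∀ u v : U, (∃ w, IsRCM (· * ·) u v w) → ∃ w, IsRLCM (· * ·) u v w)
    (hAtot : ∀ a b : A, (∃ c, a * c = b) ∨ (∃ c, b * c = a))
    (hbij : ∀ a : A, Function.Bijective (act a))
    (u v : U) (a b : A) :
    let zmul : U × A → U × A → U × A :=
      fun p q => (p.1 * act p.2 q.1, res p.2 q.1 * q.2)
    ((¬ ∃ w, IsRCM zmul (u, a) (v, b) w) ↔ ¬ ∃ w, IsRCM (· * ·) u v w) :=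
  stmt3_general act res hAtot hbij u v a b
end

section
/- Under the hypotheses of the Zappa-Szép right LCM lemma, if u, v ∈ U have a right LCM z ∈ U, then (z, e_A) is a right LCM of (u, e_A) and (v, e_A) in U ⋈ A. -/
/-!
Since `1 ∈ A` acts and restricts trivially, `(u, 1) (c, b) = (u c, b)` in `U ⋈ A`. Hence the right
multiples of `(u, 1)` are the pairs whose first coordinate is a right multiple of `u`, and right
LCMs in `U` carry over to `U ⋈ A`.
-/

section ZappaSzep

variable {U A : Type*} [Monoid U] [Monoid A] (act : A → U → U) (res : A → U → A)

def zappaSzepMul (p q : U × A) : U × A :=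
  (p.1 * act p.2 q.1, res p.2 q.1 * q.2)

variable {act res}

theorem isRightMul_zappaSzepMul_iff (B1 : ∀ u, act 1 u = u) (B7 : ∀ u, res 1 u = 1)
    (u : U) (s : U × A) :
    IsRightMul (zappaSzepMul act res) (u, 1) s ↔ IsRightMul (· * ·) u s.1 := by
  constructor
  · rintro ⟨c, rfl⟩
    exact ⟨c.1, by simp [zappaSzepMul, B1]⟩
  · rintro ⟨c, hc⟩
    exact ⟨(c, s.2), by simp [zappaSzepMul, B1, B7, hc]⟩

theorem isRCM_zappaSzepMul_iff (B1 : ∀ u, act 1 u = u) (B7 : ∀ u, res 1 u = 1)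
    (u v : U) (s : U × A) :
    IsRCM (zappaSzepMul act res) (u, 1) (v, 1) s ↔ IsRCM (· * ·) u v s.1 := by
  simp only [IsRCM, isRightMul_zappaSzepMul_iff B1 B7]

theorem IsRLCM.zappaSzepMul (B1 : ∀ u, act 1 u = u) (B7 : ∀ u, res 1 u = 1)
    {u v z : U} (hz : IsRLCM (· * ·) u v z) :
    IsRLCM (zappaSzepMul act res) (u, 1) (v, 1) (z, 1) := by
  refine ⟨(isRCM_zappaSzepMul_iff B1 B7 u v _).2 hz.1, fun s hs => ?_⟩
  have hzs : IsRightMul (· * ·) z s.1 := hz.2 s.1 ((isRCM_zappaSzepMul_iff B1 B7 u v s).1 hs)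
  exact (isRightMul_zappaSzepMul_iff B1 B7 z s).2 hzs

end ZappaSzep

theorem stmt4_general
    {U A : Type*} [Monoid U] [Monoid A]
    (act : A → U → U) (res : A → U → A)
    (B1 : ∀ u, act 1 u = u)
    (B7 : ∀ u, res 1 u = 1)
    (u v z : U) (hz : IsRLCM (· * ·) u v z) :
    let zmul : U × A → U × A → U × A :=
      fun p q => (p.1 * act p.2 q.1, res p.2 q.1 * q.2)
    IsRLCM zmul (u, (1 : A)) (v, (1 : A)) (z, (1 : A)) :=
  hz.zappaSzepMul B1 B7

theorem stmt4
    {U A : Type*} [Monoid U] [Monoid A]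
    (hU : ∀ a b c : U, a * b = a * c → b = c)
    (hA : ∀ a b c : A, a * b = a * c → b = c)
    (act : A → U → U) (res : A → U → A)
    (B1 : ∀ u, act 1 u = u)
    (B2 : ∀ a b u, act (a * b) u = act a (act b u))
    (B3 : ∀ a, act a 1 = 1)
    (B4 : ∀ a, res a 1 = a)
    (B5 : ∀ a u v, act a (u * v) = act a u * act (res a u) v)
    (B6 : ∀ a u v, res a (u * v) = res (res a u) v)
    (B7 : ∀ u, res 1 u = 1)
    (B8 : ∀ a b u, res (a * b) u = res a (act b u) * res b u)
    (hUlcm : ∀ u v : U, (∃ w, IsRCM (· * ·) u v w) → ∃ w, IsRLCM (· * ·) u v w)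
    (hAtot : ∀ a b : A, (∃ c, a * c = b) ∨ (∃ c, b * c = a))
    (hbij : ∀ a : A, Function.Bijective (act a))
    (u v z : U) (hz : IsRLCM (· * ·) u v z) :
    let zmul : U × A → U × A → U × A :=
      fun p q => (p.1 * act p.2 q.1, res p.2 q.1 * q.2)
    IsRLCM zmul (u, (1 : A)) (v, (1 : A)) (z, (1 : A)) :=
  stmt4_general act res B1 B7 u v z hz
end

section
/- Under the hypotheses of the Zappa-Szép right LCM lemma, for a ∈ A and u ∈ U, if z ∈ U is the unique element with a·z = u, then (u, a|_z) is a right LCM of (e_U, a) and (u, e_A) in U ⋈ A, and moreover (u, a|_z) = (e_U, a)(z, e_A) = (u, e_A)(e_U, a|_z). -/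
section ZappaSzep

variable {U A : Type*} [Monoid U] [Monoid A] (act : A → U → U) (res : A → U → A)

theorem zsMul_mk_one_fst (a : A) (q : U × A) :
    zsMul act res (1, a) q = (act a q.1, res a q.1 * q.2) := by
  simp only [zsMul, one_mul]

variable {act res}

theorem zsMul_mk_one_snd (B1 : ∀ u, act 1 u = u) (B7 : ∀ u, res 1 u = 1) (u : U) (q : U × A) :
    zsMul act res (u, 1) q = (u * q.1, q.2) := by
  simp only [zsMul, B1, B7, one_mul]

theorem isRLCM_zsMul (B1 : ∀ u, act 1 u = u)
    (B5 : ∀ a u v, act a (u * v) = act a u * act (res a u) v)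
    (B6 : ∀ a u v, res a (u * v) = res (res a u) v) (B7 : ∀ u, res 1 u = 1)
    {a : A} {z : U} (hinj : Function.Injective (act a))
    (hsurj : Function.Surjective (act (res a z))) :
    IsRLCM (zsMul act res) (1, a) (act a z, 1) (act a z, res a z) := by
  refine ⟨⟨⟨(z, 1), by rw [zsMul_mk_one_fst, mul_one]⟩,
    ⟨(1, res a z), by rw [zsMul_mk_one_snd B1 B7, mul_one]⟩⟩, ?_⟩
  rintro ⟨v, b⟩ ⟨⟨⟨x, c⟩, hx⟩, ⟨⟨y, d⟩, hy⟩⟩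
  rw [zsMul_mk_one_fst, Prod.mk.injEq] at hx
  rw [zsMul_mk_one_snd B1 B7, Prod.mk.injEq] at hy
  obtain ⟨w, rfl⟩ := hsurj y
  have hxzw : x = z * w := hinj (by rw [B5, hx.1, hy.1])
  refine ⟨(w, c), ?_⟩
  simp only [zsMul, Prod.mk.injEq]
  exact ⟨hy.1, by rw [← B6, ← hxzw, hx.2]⟩

end ZappaSzep

theorem stmt5_general
    {U A : Type*} [Monoid U] [Monoid A]
    (act : A → U → U) (res : A → U → A)
    (B1 : ∀ u, act 1 u = u)
    (B5 : ∀ a u v, act a (u * v) = act a u * act (res a u) v)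
    (B6 : ∀ a u v, res a (u * v) = res (res a u) v)
    (B7 : ∀ u, res 1 u = 1)
    (hbij : ∀ a : A, Function.Bijective (act a))
    (a : A) (u z : U) (hz : act a z = u) :
    let zmul : U × A → U × A → U × A :=
      fun p q => (p.1 * act p.2 q.1, res p.2 q.1 * q.2)
    IsRLCM zmul ((1 : U), a) (u, (1 : A)) (u, res a z) ∧
    zmul ((1 : U), a) (z, (1 : A)) = (u, res a z) ∧
    zmul (u, (1 : A)) ((1 : U), res a z) = (u, res a z) := by
  intro zmul
  subst hz
  refine ⟨isRLCM_zsMul B1 B5 B6 B7 (hbij a).1 (hbij (res a z)).2, ?_, ?_⟩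
  · exact (zsMul_mk_one_fst act res a (z, 1)).trans (by rw [mul_one])
  · exact (zsMul_mk_one_snd B1 B7 (act a z) (1, res a z)).trans (by rw [mul_one])

theorem stmt5
    {U A : Type*} [Monoid U] [Monoid A]
    (hU : ∀ a b c : U, a * b = a * c → b = c)
    (hA : ∀ a b c : A, a * b = a * c → b = c)
    (act : A → U → U) (res : A → U → A)
    (B1 : ∀ u, act 1 u = u)
    (B2 : ∀ a b u, act (a * b) u = act a (act b u))
    (B3 : ∀ a, act a 1 = 1)
    (B4 : ∀ a, res a 1 = a)
    (B5 : ∀ a u v, act a (u * v) = act a u * act (res a u) v)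
    (B6 : ∀ a u v, res a (u * v) = res (res a u) v)
    (B7 : ∀ u, res 1 u = 1)
    (B8 : ∀ a b u, res (a * b) u = res a (act b u) * res b u)
    (hUlcm : ∀ u v : U, (∃ w, IsRCM (· * ·) u v w) → ∃ w, IsRLCM (· * ·) u v w)
    (hAtot : ∀ a b : A, (∃ c, a * c = b) ∨ (∃ c, b * c = a))
    (hbij : ∀ a : A, Function.Bijective (act a))
    (a : A) (u z : U) (hz : act a z = u) :
    let zmul : U × A → U × A → U × A :=
      fun p q => (p.1 * act p.2 q.1, res p.2 q.1 * q.2)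
    IsRLCM zmul ((1 : U), a) (u, (1 : A)) (u, res a z) ∧
    zmul ((1 : U), a) (z, (1 : A)) = (u, res a z) ∧
    zmul (u, (1 : A)) ((1 : U), res a z) = (u, res a z) :=
  stmt5_general act res B1 B5 B6 B7 hbij a u z hz
end

section
/- Consider the submonoid U = {(r,x) : x ∈ ℕ, x ≥ 1, 0 ≤ r ≤ x−1} of the semidirect product ℕ ⋊ ℕ× (with multiplication (m,a)(n,b) = (m+an, ab)). For (r,x), (s,y) ∈ U: if (r + xℕ) ∩ (s + yℕ) ≠ ∅, then (l, lcm(x,y)) is a right LCM of (r,x) and (s,y) in U, where l is the least element of (r + xℕ) ∩ (s + yℕ); if (r + xℕ) ∩ (s + yℕ) = ∅, then (r,x) and (s,y) have no right common multiple in U. -/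
def nmul (p q : ℕ × ℕ) : ℕ × ℕ := (p.1 + p.2 * q.1, p.2 * q.2)

def Umem (p : ℕ × ℕ) : Prop := 1 ≤ p.2 ∧ p.1 < p.2

def URmul (p r : ℕ × ℕ) : Prop := ∃ q, Umem q ∧ nmul p q = r

def URCM (p q r : ℕ × ℕ) : Prop := URmul p r ∧ URmul q r

def URLCM (p q r : ℕ × ℕ) : Prop := URCM p q r ∧ ∀ s, URCM p q s → URmul r s

/-! A right multiple (m, c) ∈ U of (r, x) is exactly an element with m ≡ r (mod x), r ≤ m and
x ∣ c, the bound n < b on the cofactor (n, b) being automatic from m < c. Hence the common right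
multiples of (r, x) and (s, y) are the (m, c) ∈ U with m common to r + xℕ and s + yℕ and
lcm(x, y) ∣ c. The least common element l is below lcm(x, y), since otherwise l - lcm(x, y) would
be a smaller one, and every common element m satisfies m ≡ l (mod lcm(x, y)), so (m, c) is a right
multiple of (l, lcm(x, y)). -/

theorem exists_eq_add_mul_iff_mod_eq {r x k : ℕ} (h : r < x) :
    (∃ i, k = r + x * i) ↔ k % x = r := by
  constructor
  · rintro ⟨i, rfl⟩
    rw [Nat.add_mul_mod_self_left, Nat.mod_eq_of_lt h]
  · intro hk
    exact ⟨k / x, by rw [hk.symm, Nat.mod_add_div]⟩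

theorem Umem.nmul {p q : ℕ × ℕ} (hp : Umem p) (hq : Umem q) : Umem (nmul p q) := by
  obtain ⟨hp1, hp2⟩ := hp
  obtain ⟨hq1, hq2⟩ := hq
  refine ⟨Nat.mul_pos hp1 hq1, ?_⟩
  calc p.1 + p.2 * q.1 < p.2 + p.2 * q.1 := by omega
    _ = p.2 * (q.1 + 1) := by ring
    _ ≤ p.2 * q.2 := Nat.mul_le_mul_left _ hq2

namespace URmul

variable {p w : ℕ × ℕ}

theorem umem (hp : Umem p) (h : URmul p w) : Umem w := by
  obtain ⟨q, hq, rfl⟩ := h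
  exact hp.nmul hq

theorem exists_fst_eq (h : URmul p w) : ∃ i, w.1 = p.1 + p.2 * i := by
  obtain ⟨q, -, rfl⟩ := h
  exact ⟨q.1, rfl⟩

theorem fst_mod (hp : Umem p) (h : URmul p w) : w.1 % p.2 = p.1 :=
  (exists_eq_add_mul_iff_mod_eq hp.2).1 h.exists_fst_eq

theorem dvd_snd (h : URmul p w) : p.2 ∣ w.2 := by
  obtain ⟨q, -, rfl⟩ := h
  exact Dvd.intro _ rfl

end URmul

theorem urmul_of_dvd {r x m c : ℕ} (hrm : r ≤ m) (hmc : m < c)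
    (hm : x ∣ m - r) (hc : x ∣ c) : URmul (r, x) (m, c) := by
  obtain ⟨n, hn⟩ := hm
  obtain ⟨b, rfl⟩ := hc
  have hnb : n < b := lt_of_mul_lt_mul_left (a := x) (by omega) (Nat.zero_le x)
  exact ⟨(n, b), ⟨by omega, hnb⟩, Prod.ext (by simp only [nmul]; omega) rfl⟩

section LeastCommon

variable {r x s y l : ℕ}

theorem lt_lcm_of_isLeast (hx : 0 < x) (hy : 0 < y)
    (hl : IsLeast {k | k % x = r ∧ k % y = s} l) : l < Nat.lcm x y := by
  by_contra! hLl
  have hL : 0 < Nat.lcm x y := Nat.lcm_pos hx hy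
  have hmod : ∀ {z}, z ∣ Nat.lcm x y → (l - Nat.lcm x y) % z = l % z := fun hz =>
    (Nat.modEq_iff_dvd' (Nat.sub_le _ _)).2 (by rwa [Nat.sub_sub_self hLl])
  have : l ≤ l - Nat.lcm x y := hl.2
    ⟨(hmod (Nat.dvd_lcm_left x y)).trans hl.1.1, (hmod (Nat.dvd_lcm_right x y)).trans hl.1.2⟩
  omega

theorem urlcm_of_isLeast (hrx : Umem (r, x)) (hsy : Umem (s, y))
    (hl : IsLeast {k | k % x = r ∧ k % y = s} l) : URLCM (r, x) (s, y) (l, Nat.lcm x y) := by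
  have hx : 0 < x := hrx.1
  have hy : 0 < y := hsy.1
  have hlL := lt_lcm_of_isLeast hx hy hl
  obtain ⟨⟨hlx, hly⟩, hmin⟩ := hl
  refine ⟨⟨?_, ?_⟩, ?_⟩
  · exact urmul_of_dvd (hlx ▸ Nat.mod_le l x) hlL (hlx ▸ Nat.dvd_sub_mod l)
      (Nat.dvd_lcm_left x y)
  · exact urmul_of_dvd (hly ▸ Nat.mod_le l y) hlL (hly ▸ Nat.dvd_sub_mod l)
      (Nat.dvd_lcm_right x y)
  · rintro ⟨m, c⟩ ⟨hm₁, hm₂⟩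
    have hmx := hm₁.fst_mod hrx
    have hmy := hm₂.fst_mod hsy
    have hlm : l ≤ m := hmin ⟨hmx, hmy⟩
    refine urmul_of_dvd hlm (hm₁.umem hrx).2 (Nat.lcm_dvd ?_ ?_)
      (Nat.lcm_dvd hm₁.dvd_snd hm₂.dvd_snd)
    · exact (Nat.modEq_iff_dvd' hlm).1 (hlx.trans hmx.symm)
    · exact (Nat.modEq_iff_dvd' hlm).1 (hly.trans hmy.symm)

end LeastCommon

theorem stmt7 (r x s y : ℕ) (hrx : Umem (r, x)) (hsy : Umem (s, y)) :
    (∀ l : ℕ, ((∃ i, l = r + x * i) ∧ (∃ j, l = s + y * j)) →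
      (∀ k : ℕ, ((∃ i, k = r + x * i) ∧ (∃ j, k = s + y * j)) → l ≤ k) →
      Umem (l, Nat.lcm x y) ∧ URLCM (r, x) (s, y) (l, Nat.lcm x y)) ∧
    ((¬ ∃ k : ℕ, (∃ i, k = r + x * i) ∧ (∃ j, k = s + y * j)) →
      ¬ ∃ w, URCM (r, x) (s, y) w) := by
  refine ⟨fun l hl hmin => ?_, fun hne ⟨w, hw₁, hw₂⟩ =>
    hne ⟨w.1, hw₁.exists_fst_eq, hw₂.exists_fst_eq⟩⟩
  simp only [exists_eq_add_mul_iff_mod_eq hrx.2, exists_eq_add_mul_iff_mod_eq hsy.2] at hl hmin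
  have hleast : IsLeast {k | k % x = r ∧ k % y = s} l := ⟨hl, fun k hk => hmin k hk⟩
  exact ⟨⟨Nat.lcm_pos hrx.1 hsy.1, lt_lcm_of_isLeast hrx.1 hsy.1 hleast⟩,
    urlcm_of_isLeast hrx hsy hleast⟩
end

section
/- Let U and A satisfy the hypotheses of the Zappa-Szép right LCM lemma. For every a ∈ A, the singleton {(e_U, a)} is a foundation set in U ⋈ A; that is, for every (u,b) ∈ U ⋈ A, the principal right ideals (e_U,a)(U⋈A) and (u,b)(U⋈A) have nonempty intersection. -/
theorem exists_mul_eq_mul_of_total {A : Type*} [Monoid A]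
    (htot : ∀ a b : A, (∃ c, a * c = b) ∨ (∃ c, b * c = a)) (a b : A) :
    ∃ c d, a * c = b * d := by
  rcases htot a b with ⟨c, hc⟩ | ⟨d, hd⟩
  · exact ⟨c, 1, by rw [hc, mul_one]⟩
  · exact ⟨1, d, by rw [hd, mul_one]⟩

theorem stmt14_general
    {U A : Type*} [Monoid U] [Monoid A]
    (act : A → U → U) (res : A → U → A)
    (B3 : ∀ a, act a 1 = 1)
    (B4 : ∀ a, res a 1 = a)
    (hAtot : ∀ a b : A, (∃ c, a * c = b) ∨ (∃ c, b * c = a))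
    (hbij : ∀ a : A, Function.Bijective (act a))
    (a : A) :
    let zmul : U × A → U × A → U × A :=
      fun p q => (p.1 * act p.2 q.1, res p.2 q.1 * q.2)
    ∀ p : U × A, ∃ w, IsRCM zmul ((1 : U), a) p w := by
  intro zmul ⟨u, b⟩
  -- `(1, a) (v, c) = (a · v, a|_v c)`, so surjectivity of `a · _` fixes the first coordinate.
  obtain ⟨v, rfl⟩ := (hbij a).surjective u
  obtain ⟨c, d, hcd⟩ := exists_mul_eq_mul_of_total hAtot (res a v) b
  refine ⟨(act a v, b * d), ⟨(v, c), ?_⟩, ⟨(1, d), ?_⟩⟩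
  · simp only [zmul, one_mul, hcd]
  · simp only [zmul, B3, B4, mul_one]

theorem stmt14
    {U A : Type*} [Monoid U] [Monoid A]
    (hU : ∀ a b c : U, a * b = a * c → b = c)
    (hA : ∀ a b c : A, a * b = a * c → b = c)
    (act : A → U → U) (res : A → U → A)
    (B1 : ∀ u, act 1 u = u)
    (B2 : ∀ a b u, act (a * b) u = act a (act b u))
    (B3 : ∀ a, act a 1 = 1)
    (B4 : ∀ a, res a 1 = a)
    (B5 : ∀ a u v, act a (u * v) = act a u * act (res a u) v)
    (B6 : ∀ a u v, res a (u * v) = res (res a u) v)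
    (B7 : ∀ u, res 1 u = 1)
    (B8 : ∀ a b u, res (a * b) u = res a (act b u) * res b u)
    (hUlcm : ∀ u v : U, (∃ w, IsRCM (· * ·) u v w) → ∃ w, IsRLCM (· * ·) u v w)
    (hAtot : ∀ a b : A, (∃ c, a * c = b) ∨ (∃ c, b * c = a))
    (hbij : ∀ a : A, Function.Bijective (act a))
    (a : A) :
    let zmul : U × A → U × A → U × A :=
      fun p q => (p.1 * act p.2 q.1, res p.2 q.1 * q.2)
    ∀ p : U × A, ∃ w, IsRCM zmul ((1 : U), a) p w :=
  stmt14_general act res B3 B4 hAtot hbij a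
end

section
/- Let X be a finite alphabet and for each n let P_w = w X* denote the principal right ideal of w in X*. If F ⊆ X* is a foundation set (finite, and every word has a common right multiple with some element of F), N = max{|w| : w ∈ F}, and F' = ⋃_{w ∈ F} {ww' : w' ∈ X^{N−|w|}}, then F' = X^N. -/
theorem List.exists_prefix_mem_of_forall_exists_common_extension {X : Type*}
    {F : Finset (List X)}
    (hF : ∀ z : List X, ∃ w ∈ F, ∃ k : List X,
      (∃ w' : List X, w ++ w' = k) ∧ (∃ z' : List X, z ++ z' = k))
    {N : ℕ} (hN : ∀ w ∈ F, w.length ≤ N) {v : List X} (hv : N ≤ v.length) :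
    ∃ w ∈ F, w <+: v := by
  obtain ⟨w, hw, k, hwk, hvk⟩ := hF v
  exact ⟨w, hw, List.prefix_of_prefix_length_le hwk hvk ((hN w hw).trans hv)⟩

theorem stmt19_general {X : Type*} (F : Finset (List X))
    (hF : ∀ z : List X, ∃ w ∈ F, ∃ k : List X,
      (∃ w' : List X, w ++ w' = k) ∧ (∃ z' : List X, z ++ z' = k))
    (N : ℕ) (hN : ∀ w ∈ F, w.length ≤ N) :
    {v : List X | ∃ w ∈ F, ∃ w' : List X, w'.length = N - w.length ∧ v = w ++ w'} =
      {v : List X | v.length = N} := by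
  ext v
  simp only [Set.mem_ofPred_eq]
  constructor
  · rintro ⟨w, hw, w', hw', rfl⟩
    rw [List.length_append, hw']
    exact Nat.add_sub_cancel' (hN w hw)
  · intro hv
    obtain ⟨w, hw, t, rfl⟩ :=
      List.exists_prefix_mem_of_forall_exists_common_extension hF hN hv.ge
    refine ⟨w, hw, t, ?_, rfl⟩
    rw [← hv, List.length_append, Nat.add_sub_cancel_left]

theorem stmt19 {X : Type*} [Fintype X] (F : Finset (List X))
    (hF : ∀ z : List X, ∃ w ∈ F, ∃ k : List X,
      (∃ w' : List X, w ++ w' = k) ∧ (∃ z' : List X, z ++ z' = k))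
    (N : ℕ) (hN : ∀ w ∈ F, w.length ≤ N) (hNmax : ∃ w ∈ F, w.length = N) :
    {v : List X | ∃ w ∈ F, ∃ w' : List X, w'.length = N - w.length ∧ v = w ++ w'} =
      {v : List X | v.length = N} :=
  stmt19_general F hF N hN
end
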